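/- (Contraction estimate in the proof of Proposition 2.3.) Let (x_n, y_n)_{n≥0} be a sequence of positive pairs following the explicit SG recursion with x0 ≥ y0 > 0. Then for every n ≥ 1: 2x_n + y_n ≤ (13/15)(2x_{n−1} + y_{n−1}). Consequently the series Σ_{n≥0}(2x_n + y_n) converges and Σ_{n≥0}(2x_n + y_n) ≤ (15/2)(2x0 + y0). -/
import Mathlib


noncomputable section

/-- `N(x, y) = √(4x² + 6xy + 6y²)`. -/
def NSG (x y : ℝ) : ℝ := Real.sqrt (4 * x ^ 2 + 6 * x * y + 6 * y ^ 2)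

/-- A sequence of positive pairs following the explicit SG recursion. -/
def FollowsSG (X Y : ℕ → ℝ) : Prop :=
  (∀ n, 0 < X n ∧ 0 < Y n) ∧
  ∀ n, X (n + 1) = (14 * X n + 3 * Y n - 2 * NSG (X n) (Y n)) / 15 ∧
       Y (n + 1) = (-2 * X n + Y n + NSG (X n) (Y n)) / 5

theorem stmt13 (X Y : ℕ → ℝ) (h : FollowsSG X Y) (h0 : Y 0 ≤ X 0) :
    (∀ n, 2 * X (n + 1) + Y (n + 1) ≤ (13 / 15) * (2 * X n + Y n)) ∧
    Summable (fun n => 2 * X n + Y n) ∧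
    ∑' n, (2 * X n + Y n) ≤ (15 / 2) * (2 * X 0 + Y 0) := by
  obtain ⟨hpos, hrec⟩ := h
  have hstep : ∀ n, 2 * X (n + 1) + Y (n + 1) ≤ (13 / 15) * (2 * X n + Y n) := by
    intro n
    obtain ⟨hx, hy⟩ := hrec n
    have hN : 0 ≤ NSG (X n) (Y n) := Real.sqrt_nonneg _
    have h1 := (hpos n).1; have h2 := (hpos n).2
    rw [hx, hy]; linarith
  have hgeom : ∀ n, 2 * X n + Y n ≤ (13 / 15 : ℝ) ^ n * (2 * X 0 + Y 0) := by
    intro n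
    induction n with
    | zero => simp
    | succ k ih =>
      calc 2 * X (k + 1) + Y (k + 1) ≤ (13 / 15) * (2 * X k + Y k) := hstep k
        _ ≤ (13 / 15) * ((13 / 15 : ℝ) ^ k * (2 * X 0 + Y 0)) := by linarith
        _ = (13 / 15 : ℝ) ^ (k + 1) * (2 * X 0 + Y 0) := by ring
  have hnn : ∀ n, 0 ≤ 2 * X n + Y n := fun n => by
    have := (hpos n).1; have := (hpos n).2; linarith
  have hG : Summable (fun n : ℕ => (13 / 15 : ℝ) ^ n * (2 * X 0 + Y 0)) :=
    (summable_geometric_of_lt_one (by norm_num) (by norm_num)).mul_right _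
  have hS : Summable (fun n => 2 * X n + Y n) :=
    Summable.of_nonneg_of_le hnn hgeom hG
  refine ⟨hstep, hS, ?_⟩
  calc ∑' n, (2 * X n + Y n) ≤ ∑' n : ℕ, (13 / 15 : ℝ) ^ n * (2 * X 0 + Y 0) :=
        Summable.tsum_le_tsum hgeom hS hG
    _ = (1 - 13 / 15 : ℝ)⁻¹ * (2 * X 0 + Y 0) := by
        rw [tsum_mul_right, tsum_geometric_of_lt_one (by norm_num) (by norm_num)]
    _ = (15 / 2) * (2 * X 0 + Y 0) := by norm_num
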